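/- arXiv:1708.09325 — 6 statements merged into one kernel-verified Lean document; each statement's English description precedes it below -/
import Mathlib

section
/- Let F be a set of feasibility constraints on vectors in R^n, and let w, w1, w2 be weight vectors in R^n with w = w1 + w2. If a feasible vector x satisfies w1·x ≥ (1/α)·(w1·x*) for every feasible x*, and w2·x ≥ (1/α)·(w2·x*) for every feasible x*, then w·x ≥ (1/α)·(w·x*) for every feasible x* (i.e., x is an α-approximation with respect to w). -/
open Finset

/-- Local Ratio Theorem (Bar-Yehuda and Even): if `x` is an `α`-approximation
with respect to weight vectors `w1` and `w2`, then it is an `α`-approximation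
with respect to `w = w1 + w2`. -/
theorem local_ratio_theorem (n : ℕ) (F : Set (Fin n → ℝ)) (α : ℝ)
    (w w1 w2 x : Fin n → ℝ) (hw : w = w1 + w2) (hxF : x ∈ F)
    (h1 : ∀ y ∈ F, (1 / α) * (∑ i, w1 i * y i) ≤ ∑ i, w1 i * x i)
    (h2 : ∀ y ∈ F, (1 / α) * (∑ i, w2 i * y i) ≤ ∑ i, w2 i * x i) :
    ∀ y ∈ F, (1 / α) * (∑ i, w i * y i) ≤ ∑ i, w i * x i := by
  intro y hy
  have := h1 y hy
  have := h2 y hy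
  subst hw
  simp only [Pi.add_apply, add_mul, Finset.sum_add_distrib]
  nlinarith
end

section
/- Let G be a finite graph with nonnegative vertex weights w, and suppose every closed neighborhood N[u] can be covered by at most k cliques. If x : V(G) → R≥0 satisfies ∑_{v ∈ Q} x(v) ≤ 1 for every clique Q, then there exists an independent set S of G with w(S) ≥ (1/k)·∑_{v} w(v)·x(v). In particular, the greedy local-ratio procedure produces such a set. -/
open Finset
open scoped Classical

private lemma sum_biUnion_le' {α β : Type*} [DecidableEq β] (A : Finset α) (t : α → Finset β)
    (f : β → ℝ) (hf : ∀ b, 0 ≤ f b) :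
    ∑ b ∈ A.biUnion t, f b ≤ ∑ a ∈ A, ∑ b ∈ t a, f b := by
  classical
  induction A using Finset.induction with
  | empty => simp
  | @insert a A ha ih =>
    rw [Finset.biUnion_insert, Finset.sum_insert ha]
    have h1 : ∑ b ∈ t a ∪ A.biUnion t, f b ≤ ∑ b ∈ t a, f b + ∑ b ∈ A.biUnion t, f b := by
      have := Finset.sum_union_inter (s₁ := t a) (s₂ := A.biUnion t) (f := f)
      have h0 : 0 ≤ ∑ b ∈ t a ∩ A.biUnion t, f b := Finset.sum_nonneg fun b _ => hf b
      linarith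
    exact h1.trans (by linarith)

private lemma local_ratio_aux {V : Type*} [Fintype V]
    (G : SimpleGraph V) (k : ℕ) (hk : 0 < k)
    (hcov : ∀ u : V, ∃ 𝒬 : Finset (Finset V), 𝒬.card ≤ k ∧
      (∀ Q ∈ 𝒬, G.IsClique (Q : Set V)) ∧
      (∀ v : V, (v = u ∨ G.Adj u v) → ∃ Q ∈ 𝒬, v ∈ Q))
    (x : V → ℝ) (hx : ∀ v, 0 ≤ x v)
    (hQ : ∀ Q : Finset V, G.IsClique (Q : Set V) → ∑ v ∈ Q, x v ≤ 1) :
    ∀ n : ℕ, ∀ w : V → ℝ, (∀ v, 0 ≤ w v) →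
      (Finset.univ.filter fun v => 0 < w v).card ≤ n →
      ∃ S : Finset V, (∀ a ∈ S, ∀ b ∈ S, a ≠ b → ¬ G.Adj a b) ∧
        (∀ v ∈ S, 0 < w v) ∧
        (1 / (k : ℝ)) * ∑ v, w v * x v ≤ ∑ v ∈ S, w v := by
  intro n
  induction n with
  | zero =>
    intro w hw hcard
    have hz : ∀ v, w v = 0 := by
      intro v
      by_contra hv
      have : v ∈ Finset.univ.filter fun v => 0 < w v := by
        simp [lt_of_le_of_ne (hw v) (Ne.symm hv)]
      have := Finset.card_pos.mpr ⟨v, this⟩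
      omega
    exact ⟨∅, by simp, by simp, by simp [hz]⟩
  | succ n ih =>
    intro w hw hcard
    by_cases hex : ∃ u, 0 < w u
    · -- pick u of minimal positive weight
      set supp := Finset.univ.filter fun v => 0 < w v with hsupp
      have hne : supp.Nonempty := by
        obtain ⟨u, hu⟩ := hex
        exact ⟨u, by simp [hsupp, hu]⟩
      obtain ⟨u, huS, humin⟩ := supp.exists_min_image w hne
      have hupos : 0 < w u := by simpa [hsupp] using huS
      set m := w u with hm
      set P : V → Prop := fun v => (v = u ∨ G.Adj u v) ∧ 0 < w v with hP
      set w1 : V → ℝ := fun v => if P v then m else 0 with hw1def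
      set w2 : V → ℝ := fun v => w v - w1 v with hw2def
      have hw1nn : ∀ v, 0 ≤ w1 v := by
        intro v; simp only [hw1def]
        split
        · exact hupos.le
        · exact le_refl 0
      have hw2nn : ∀ v, 0 ≤ w2 v := by
        intro v; simp only [hw2def, hw1def]
        split
        · rename_i hPv
          have : v ∈ supp := by simp [hsupp, hPv.2]
          have := humin v this
          linarith
        · simpa using hw v
      have hw2u : w2 u = 0 := by
        have hPu : P u := ⟨Or.inl rfl, hupos⟩
        simp only [hw2def, hw1def]
        rw [if_pos hPu]
        exact sub_self _
      have hw2le : ∀ v, w2 v ≤ w v := fun v => by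
        have := hw1nn v; simp only [hw2def]; linarith
      -- support of w2 shrinks
      have hsub : (Finset.univ.filter fun v => 0 < w2 v) ⊆ supp.erase u := by
        intro v hv
        simp only [Finset.mem_filter, Finset.mem_univ, true_and] at hv
        refine Finset.mem_erase.mpr ⟨?_, ?_⟩
        · rintro rfl; rw [hw2u] at hv; exact lt_irrefl 0 hv
        · simp [hsupp, lt_of_lt_of_le hv (hw2le v)]
      have hcard2 : (Finset.univ.filter fun v => 0 < w2 v).card ≤ n := by
        have h1 := Finset.card_le_card hsub
        have h2 := Finset.card_erase_of_mem huS
        have h3 : supp.card ≤ n + 1 := hcard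
        omega
      obtain ⟨S, hSind, hSpos, hSsum⟩ := ih w2 hw2nn hcard2
      have hSw : ∀ v ∈ S, 0 < w v := fun v hv => lt_of_lt_of_le (hSpos v hv) (hw2le v)
      have huNS : u ∉ S := fun h => absurd (hSpos u h) (by rw [hw2u]; exact lt_irrefl 0)
      -- bound on ∑ w1 x
      obtain ⟨𝒬, h𝒬k, h𝒬cl, h𝒬cov⟩ := hcov u
      set T := Finset.univ.filter P with hT
      have hsum1 : ∑ v, w1 v * x v = m * ∑ v ∈ T, x v := by
        rw [Finset.mul_sum]
        rw [← Finset.sum_filter_add_sum_filter_not Finset.univ P fun v => w1 v * x v]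
        have hz : ∑ v ∈ Finset.univ.filter fun v => ¬ P v, w1 v * x v = 0 := by
          apply Finset.sum_eq_zero
          intro v hv
          simp only [Finset.mem_filter] at hv
          simp only [hw1def]
          rw [if_neg hv.2, zero_mul]
        rw [hz, add_zero]
        apply Finset.sum_congr rfl
        intro v hv
        simp only [Finset.mem_filter] at hv
        simp only [hw1def]
        rw [if_pos hv.2]
      have hTsub : T ⊆ 𝒬.biUnion id := by
        intro v hv
        simp only [hT, Finset.mem_filter] at hv
        obtain ⟨Q, hQm, hvQ⟩ := h𝒬cov v hv.2.1
        exact Finset.mem_biUnion.mpr ⟨Q, hQm, hvQ⟩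
      have hTk : ∑ v ∈ T, x v ≤ (k : ℝ) := by
        calc ∑ v ∈ T, x v ≤ ∑ v ∈ 𝒬.biUnion id, x v :=
              Finset.sum_le_sum_of_subset_of_nonneg hTsub fun v _ _ => hx v
          _ ≤ ∑ Q ∈ 𝒬, ∑ v ∈ Q, x v := sum_biUnion_le' 𝒬 id x hx
          _ ≤ ∑ Q ∈ 𝒬, 1 := Finset.sum_le_sum fun Q hQm => hQ Q (h𝒬cl Q hQm)
          _ = (𝒬.card : ℝ) := by simp
          _ ≤ (k : ℝ) := by exact_mod_cast h𝒬k
      have hkpos : (0:ℝ) < k := by exact_mod_cast hk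
      have hbound1 : (1 / (k : ℝ)) * ∑ v, w1 v * x v ≤ m := by
        rw [hsum1]
        rw [div_mul_eq_mul_div, one_mul, div_le_iff₀ hkpos]
        calc m * ∑ v ∈ T, x v ≤ m * (k:ℝ) := by
              apply mul_le_mul_of_nonneg_left hTk hupos.le
          _ = m * k := rfl
      -- choose S'
      by_cases hA : ∃ v ∈ S, P v
      · -- S works
        obtain ⟨v0, hv0S, hv0P⟩ := hA
        refine ⟨S, hSind, hSw, ?_⟩
        have hmS : m ≤ ∑ v ∈ S, w1 v := by
          have h1 := Finset.single_le_sum (f := w1) (fun v _ => hw1nn v) hv0S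
          have h2 : w1 v0 = m := by simp only [hw1def]; exact if_pos hv0P
          linarith
        have hsplit : ∑ v, w v * x v = (∑ v, w1 v * x v) + ∑ v, w2 v * x v := by
          rw [← Finset.sum_add_distrib]
          apply Finset.sum_congr rfl
          intro v _
          simp [hw2def]; ring
        have hSsplit : ∑ v ∈ S, w v = (∑ v ∈ S, w1 v) + ∑ v ∈ S, w2 v := by
          rw [← Finset.sum_add_distrib]
          apply Finset.sum_congr rfl
          intro v _
          simp [hw2def]
        rw [hsplit, hSsplit, mul_add]
        linarith
      · -- insert u into S
        push_neg at hA
        have hind : ∀ a ∈ insert u S, ∀ b ∈ insert u S, a ≠ b → ¬ G.Adj a b := by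
          intro a ha b hb hab
          rcases Finset.mem_insert.mp ha with rfl | haS
          · rcases Finset.mem_insert.mp hb with rfl | hbS
            · exact absurd rfl hab
            · intro hadj
              exact hA b hbS ⟨Or.inr hadj, hSw b hbS⟩
          · rcases Finset.mem_insert.mp hb with rfl | hbS
            · intro hadj
              exact hA a haS ⟨Or.inr hadj.symm, hSw a haS⟩
            · exact hSind a haS b hbS hab
        refine ⟨insert u S, hind, ?_, ?_⟩
        · intro v hv
          rcases Finset.mem_insert.mp hv with rfl | hvS
          · exact hupos
          · exact hSw v hvS
        · have hPu : P u := ⟨Or.inl rfl, hupos⟩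
          have hmS : m ≤ ∑ v ∈ insert u S, w1 v := by
            have h1 := Finset.single_le_sum (f := w1) (fun v (_ : v ∈ insert u S) => hw1nn v)
              (Finset.mem_insert_self u S)
            have h2 : w1 u = m := by simp only [hw1def]; exact if_pos hPu
            linarith
          have hS2 : ∑ v ∈ insert u S, w2 v = ∑ v ∈ S, w2 v := by
            rw [Finset.sum_insert huNS, hw2u, zero_add]
          have hsplit : ∑ v, w v * x v = (∑ v, w1 v * x v) + ∑ v, w2 v * x v := by
            rw [← Finset.sum_add_distrib]
            apply Finset.sum_congr rfl
            intro v _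
            simp [hw2def]; ring
          have hSsplit : ∑ v ∈ insert u S, w v
              = (∑ v ∈ insert u S, w1 v) + ∑ v ∈ insert u S, w2 v := by
            rw [← Finset.sum_add_distrib]
            apply Finset.sum_congr rfl
            intro v _
            simp [hw2def]
          rw [hsplit, hSsplit, mul_add, hS2]
          linarith
    · push_neg at hex
      have hz : ∀ v, w v = 0 := fun v => le_antisymm (hex v) (hw v)
      exact ⟨∅, by simp, by simp, by simp [hz]⟩

/-- k-approximation guarantee of the local ratio algorithm: if every closed
neighborhood is covered by at most `k` cliques and `x` satisfies all clique
constraints, then there is an independent set `S` with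
`w(S) ≥ (1/k) · ∑ v, w v * x v`. -/
theorem local_ratio_mwis_approx {V : Type*} [Fintype V]
    (G : SimpleGraph V) (k : ℕ)
    (w : V → ℝ) (hw : ∀ v, 0 ≤ w v)
    (hcov : ∀ u : V, ∃ 𝒬 : Finset (Finset V), 𝒬.card ≤ k ∧
      (∀ Q ∈ 𝒬, G.IsClique (Q : Set V)) ∧
      (∀ v : V, (v = u ∨ G.Adj u v) → ∃ Q ∈ 𝒬, v ∈ Q))
    (x : V → ℝ) (hx : ∀ v, 0 ≤ x v)
    (hQ : ∀ Q : Finset V, G.IsClique (Q : Set V) → ∑ v ∈ Q, x v ≤ 1) :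
    ∃ S : Finset V, (∀ a ∈ S, ∀ b ∈ S, a ≠ b → ¬ G.Adj a b) ∧
      (1 / (k : ℝ)) * ∑ v, w v * x v ≤ ∑ v ∈ S, w v := by
  rcases Nat.eq_zero_or_pos k with rfl | hk
  · exact ⟨∅, by simp, by simp⟩
  · obtain ⟨S, hind, _, hsum⟩ := local_ratio_aux G k hk hcov x hx hQ
      (Finset.univ.filter fun v => 0 < w v).card w hw le_rfl
    exact ⟨S, hind, hsum⟩
end

section
/- Let G be a finite graph with weights w, u a vertex with w(u) > 0, and suppose x : V(G) → R≥0 satisfies ∑_{v ∈ N[u]} x(v) ≤ k. Define w1(v) = w(u) for v ∈ N[u] and 0 otherwise. If z is the indicator vector of an independent set S containing at least one vertex of N[u], then w1·z ≥ w(u) ≥ (1/k)·(w1·x). -/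
open Finset
open scoped Classical

/-- Key local-ratio inequality: if `∑_{v ∈ N[u]} x v ≤ k`, `w1` is `w u` on
`N[u]` and `0` elsewhere, and `z` is the indicator of an independent set `S`
containing a vertex of `N[u]`, then `w1·z ≥ w u ≥ (1/k)·(w1·x)`. -/
theorem local_ratio_key_inequality {V : Type*} [Fintype V]
    (G : SimpleGraph V) (w : V → ℝ) (u : V) (hu : 0 < w u)
    (k : ℝ) (hk : 0 < k)
    (x : V → ℝ) (hx : ∀ v, 0 ≤ x v)
    (hNx : ∑ v ∈ Finset.univ.filter (fun v => v = u ∨ G.Adj u v), x v ≤ k)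
    (w1 : V → ℝ) (hw1 : ∀ v, w1 v = if v = u ∨ G.Adj u v then w u else 0)
    (S : Finset V) (hSindep : ∀ a ∈ S, ∀ b ∈ S, a ≠ b → ¬ G.Adj a b)
    (hSN : ∃ v ∈ S, v = u ∨ G.Adj u v)
    (z : V → ℝ) (hz : ∀ v, z v = if v ∈ S then 1 else 0) :
    w u ≤ ∑ v, w1 v * z v ∧ (1 / k) * ∑ v, w1 v * x v ≤ w u := by
  obtain ⟨v0, hv0S, hv0N⟩ := hSN
  constructor
  · have h1 : w u = w1 v0 * z v0 := by
      rw [hw1, hz, if_pos hv0N, if_pos hv0S, mul_one]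
    rw [h1]
    apply Finset.single_le_sum (f := fun v => w1 v * z v) _ (Finset.mem_univ v0)
    intro v _
    show 0 ≤ w1 v * z v
    rw [hw1, hz]
    split_ifs <;> simp [le_of_lt hu]
  · have hsum : ∑ v, w1 v * x v = w u * ∑ v ∈ Finset.univ.filter (fun v => v = u ∨ G.Adj u v), x v := by
      rw [Finset.mul_sum, ← Finset.sum_filter_add_sum_filter_not Finset.univ (fun v => v = u ∨ G.Adj u v) (fun v => w1 v * x v)]
      have h2 : ∑ v ∈ Finset.univ.filter (fun v => ¬(v = u ∨ G.Adj u v)), w1 v * x v = 0 := by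
        apply Finset.sum_eq_zero
        intro v hv
        rw [Finset.mem_filter] at hv
        rw [hw1, if_neg hv.2, zero_mul]
      rw [h2, add_zero]
      apply Finset.sum_congr rfl
      intro v hv
      rw [Finset.mem_filter] at hv
      rw [hw1, if_pos hv.2]
    rw [hsum, div_mul_eq_mul_div, one_mul, div_le_iff₀ hk]
    exact mul_le_mul_of_nonneg_left hNx (le_of_lt hu)
end

section
/- In the conflict graph G_C, for every vertex u corresponding to an edge (a_i, b_j) of G_I, the closed neighborhood N[u] is covered by the six sets S_u^{i−1}, S_u^i, S_u^{i+1}, S_u^{j−1}, S_u^j, S_u^{j+1}, and each of these sets is a clique in G_C. -/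
open Finset

/-- The conflict graph `G_C` of a bipartite graph `G_I`: vertices are the edges
of `G_I` (an edge `(i, j)` joins `a_i ∈ A` to `b_j ∈ B`), and two distinct edges
`(i, j)`, `(k, l)` are adjacent iff `k ∈ {i-1, i, i+1}` or `l ∈ {j-1, j, j+1}`. -/
def ConflictGraph (E : Set (ℤ × ℤ)) : SimpleGraph {e : ℤ × ℤ // e ∈ E} where
  Adj u v := u ≠ v ∧ (|v.val.1 - u.val.1| ≤ 1 ∨ |v.val.2 - u.val.2| ≤ 1)
  symm := by
    constructor
    rintro u v ⟨h1, h2⟩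
    refine ⟨h1.symm, ?_⟩
    rcases h2 with h | h
    · left; rw [abs_sub_comm]; exact h
    · right; rw [abs_sub_comm]; exact h
  loopless := by constructor; rintro u ⟨h, -⟩; exact h rfl

/-- The set `S_u^r` (left side): members of the closed neighborhood of `u`
whose corresponding edge of `G_I` has left endpoint `a_r`. -/
def SA (E : Set (ℤ × ℤ)) (u : {e : ℤ × ℤ // e ∈ E}) (r : ℤ) :
    Set {e : ℤ × ℤ // e ∈ E} :=
  {v | (v = u ∨ (ConflictGraph E).Adj u v) ∧ v.val.1 = r}

/-- The set `S_u^r` (right side): members of the closed neighborhood of `u`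
whose corresponding edge of `G_I` has right endpoint `b_r`. -/
def SB (E : Set (ℤ × ℤ)) (u : {e : ℤ × ℤ // e ∈ E}) (r : ℤ) :
    Set {e : ℤ × ℤ // e ∈ E} :=
  {v | (v = u ∨ (ConflictGraph E).Adj u v) ∧ v.val.2 = r}

theorem Int.abs_sub_le_one_iff {a b : ℤ} : |a - b| ≤ 1 ↔ a = b - 1 ∨ a = b ∨ a = b + 1 := by
  rw [abs_le]; omega

namespace ConflictGraph

variable {E : Set (ℤ × ℤ)}

theorem isClique_setOf_fst_eq (r : ℤ) : (ConflictGraph E).IsClique {v | v.val.1 = r} := by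
  intro v (hv : v.val.1 = r) w (hw : w.val.1 = r) hne
  exact ⟨hne, Or.inl (by rw [hv, hw, sub_self, abs_zero]; exact zero_le_one)⟩

theorem isClique_setOf_snd_eq (r : ℤ) : (ConflictGraph E).IsClique {v | v.val.2 = r} := by
  intro v (hv : v.val.2 = r) w (hw : w.val.2 = r) hne
  exact ⟨hne, Or.inr (by rw [hv, hw, sub_self, abs_zero]; exact zero_le_one)⟩

theorem abs_sub_le_one_of_closedNbhd {u v : {e : ℤ × ℤ // e ∈ E}}
    (hv : v = u ∨ (ConflictGraph E).Adj u v) :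
    |v.val.1 - u.val.1| ≤ 1 ∨ |v.val.2 - u.val.2| ≤ 1 := by
  rcases hv with rfl | hadj
  · simp
  · exact hadj.2

end ConflictGraph

/-- For every vertex `u = (a_i, b_j)` of the conflict graph, the closed
neighborhood `N[u]` is covered by the six sets
`S_u^{i-1}, S_u^i, S_u^{i+1}, S_u^{j-1}, S_u^j, S_u^{j+1}`,
and each of these sets is a clique in `G_C`. -/
theorem closed_nbhd_covered_by_six_cliques (E : Set (ℤ × ℤ))
    (u : {e : ℤ × ℤ // e ∈ E}) :
    (∀ v : {e : ℤ × ℤ // e ∈ E}, (v = u ∨ (ConflictGraph E).Adj u v) →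
      v ∈ SA E u (u.val.1 - 1) ∪ SA E u u.val.1 ∪ SA E u (u.val.1 + 1) ∪
          SB E u (u.val.2 - 1) ∪ SB E u u.val.2 ∪ SB E u (u.val.2 + 1)) ∧
    (∀ r : ℤ, (ConflictGraph E).IsClique (SA E u r) ∧
              (ConflictGraph E).IsClique (SB E u r)) := by
  refine ⟨fun v hv => ?_, fun r =>
    ⟨(ConflictGraph.isClique_setOf_fst_eq r).subset fun _ hv => hv.2,
      (ConflictGraph.isClique_setOf_snd_eq r).subset fun _ hv => hv.2⟩⟩
  have hcoord := ConflictGraph.abs_sub_le_one_of_closedNbhd hv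
  simp only [Int.abs_sub_le_one_iff] at hcoord
  simp only [SA, SB, Set.mem_union, Set.mem_ofPred_eq]
  tauto
end

section
/- Let G_I be a bipartite graph with sides A = a_1,…,a_n and B = b_1,…,b_n, and let G_C be its conflict graph. If x : V(G_C) → R≥0 satisfies ∑_{v ∈ Q} x(v) ≤ 1 for every clique Q of G_C, then for every vertex u of G_C, ∑_{v ∈ N[u]} x(v) ≤ 6. -/
/-! All edges at the same `A`-vertex `a_i` pairwise conflict, and so do all edges at
the same `B`-vertex `b_j`, so these "lines" are cliques of `G_C`. The closed neighbourhood of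
`(a_i, b_j)` is covered by the six lines at `a_{i-1}, a_i, a_{i+1}, b_{j-1}, b_j, b_{j+1}`, each
of which carries weight at most `1`. -/

open Finset
open scoped Classical

/-- The conflict graph of a (finite) bipartite graph `G_I`. -/
def ConflictGraphF (E : Finset (ℤ × ℤ)) : SimpleGraph {e : ℤ × ℤ // e ∈ E} where
  Adj u v := u ≠ v ∧ (|v.val.1 - u.val.1| ≤ 1 ∨ |v.val.2 - u.val.2| ≤ 1)
  symm := by
    constructor
    rintro u v ⟨h1, h2⟩
    refine ⟨h1.symm, ?_⟩
    rcases h2 with h | h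
    · left; rw [abs_sub_comm]; exact h
    · right; rw [abs_sub_comm]; exact h
  loopless := by constructor; rintro u ⟨h, -⟩; exact h rfl

namespace Finset

variable {α ι M : Type*} [DecidableEq α]
  [AddCommMonoid M] [PartialOrder M] [IsOrderedAddMonoid M]

theorem sum_biUnion_le_sum_sum {x : α → M} (hx : ∀ v, 0 ≤ x v) (I : Finset ι)
    (Q : ι → Finset α) : ∑ v ∈ I.biUnion Q, x v ≤ ∑ i ∈ I, ∑ v ∈ Q i, x v := by
  rw [← sup_eq_biUnion]
  refine I.apply_sup_le_sum (f := fun s => ∑ v ∈ s, x v) sum_empty fun {s t} => ?_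
  rw [← sum_union_inter]
  exact le_add_of_nonneg_right (sum_nonneg fun v _ => hx v)

theorem sum_le_card_nsmul_of_subset_biUnion {x : α → M} (hx : ∀ v, 0 ≤ x v) {I : Finset ι}
    {Q : ι → Finset α} {c : M} (hQ : ∀ i ∈ I, ∑ v ∈ Q i, x v ≤ c) {S : Finset α}
    (hS : S ⊆ I.biUnion Q) : ∑ v ∈ S, x v ≤ #I • c :=
  calc ∑ v ∈ S, x v ≤ ∑ v ∈ I.biUnion Q, x v :=
        sum_le_sum_of_subset_of_nonneg hS fun v _ _ => hx v
    _ ≤ ∑ i ∈ I, ∑ v ∈ Q i, x v := sum_biUnion_le_sum_sum hx I Q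
    _ ≤ #I • c := sum_le_card_nsmul I _ c hQ

end Finset

namespace ConflictGraphF

/-- `line E (.inl i)` is the set of edges at `a_i`, and `line E (.inr j)` those at `b_j`. -/
def line (E : Finset (ℤ × ℤ)) : ℤ ⊕ ℤ → Finset {e : ℤ × ℤ // e ∈ E}
  | .inl i => univ.filter fun v => v.val.1 = i
  | .inr j => univ.filter fun v => v.val.2 = j

theorem isClique_line (E : Finset (ℤ × ℤ)) (l : ℤ ⊕ ℤ) :
    (ConflictGraphF E).IsClique (line E l : Set {e : ℤ × ℤ // e ∈ E}) := by
  intro v hv w hw hvw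
  cases l <;> simp_all [line, ConflictGraphF]

theorem closedNbhd_subset_biUnion_line (E : Finset (ℤ × ℤ)) (u : {e : ℤ × ℤ // e ∈ E}) :
    univ.filter (fun v => v = u ∨ (ConflictGraphF E).Adj u v) ⊆
      ((Icc (u.val.1 - 1) (u.val.1 + 1)).disjSum (Icc (u.val.2 - 1) (u.val.2 + 1))).biUnion
        (line E) := by
  intro v hv
  simp only [mem_filter, mem_univ, true_and] at hv
  rw [mem_biUnion]
  rcases hv with rfl | ⟨-, h | h⟩
  · exact ⟨.inl v.val.1, by simp, by simp [line]⟩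
  · rw [abs_le] at h
    exact ⟨.inl v.val.1, by simp only [inl_mem_disjSum, mem_Icc]; omega, by simp [line]⟩
  · rw [abs_le] at h
    exact ⟨.inr v.val.2, by simp only [inr_mem_disjSum, mem_Icc]; omega, by simp [line]⟩

end ConflictGraphF

/-- If `x` is a nonnegative fractional solution satisfying all clique
constraints of the conflict graph `G_C`, then the sum of `x` over any closed
neighborhood `N[u]` is at most `6`. -/
theorem conflict_graph_closed_nbhd_sum_le_six (E : Finset (ℤ × ℤ))
    (x : {e : ℤ × ℤ // e ∈ E} → ℝ) (hx : ∀ v, 0 ≤ x v)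
    (hQ : ∀ Q : Finset {e : ℤ × ℤ // e ∈ E},
      (ConflictGraphF E).IsClique (Q : Set {e : ℤ × ℤ // e ∈ E}) →
      ∑ v ∈ Q, x v ≤ 1) :
    ∀ u : {e : ℤ × ℤ // e ∈ E},
      ∑ v ∈ Finset.univ.filter
        (fun v => v = u ∨ (ConflictGraphF E).Adj u v), x v ≤ 6 := by
  intro u
  have hsum := sum_le_card_nsmul_of_subset_biUnion hx
    (fun l _ => hQ _ (ConflictGraphF.isClique_line E l))
    (ConflictGraphF.closedNbhd_subset_biUnion_line E u)
  have hcard :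
      #((Icc (u.val.1 - 1) (u.val.1 + 1)).disjSum (Icc (u.val.2 - 1) (u.val.2 + 1))) = 6 := by
    simp only [card_disjSum, Int.card_Icc]
    omega
  simpa [hcard] using hsum
end

section
/- Let s1 and s2 be strings of length n such that s2 is a permutation of s1 under a bijection π of positions. If P(s1) and P(s2) are partitions of s1 and s2 into r common blocks realizing π (each block of s1 is mapped by π, preserving order within the block, onto an equal block of s2), then π preserves at least n − r duos of s1. -/
open Finset
open scoped Classical

/-- Reduction from MCSP to MDSM: if `s2` is a permutation of `s1` under a
bijection `π` of positions, and the positions can be partitioned into `r`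
order-consecutive blocks (`b` monotone and surjective onto `Fin r`) realizing
`π` (within a block, `π` maps consecutive positions to consecutive positions),
then `π` preserves at least `n - r` duos of `s1`. -/
theorem partition_preserves_duos {α : Type*} (n r : ℕ)
    (s1 s2 : Fin n → α) (π : Equiv.Perm (Fin n))
    (hchar : ∀ i : Fin n, s2 (π i) = s1 i)
    (b : Fin n → Fin r) (hmono : Monotone b) (hsurj : Function.Surjective b)
    (hreal : ∀ (i : ℕ) (h : i + 1 < n),
      b ⟨i, Nat.lt_of_succ_lt h⟩ = b ⟨i + 1, h⟩ →
      ((π ⟨i + 1, h⟩ : ℕ) = (π ⟨i, Nat.lt_of_succ_lt h⟩ : ℕ) + 1)) :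
    n - r ≤ (Finset.univ.filter (fun i : Fin n =>
      ∃ h : (i : ℕ) + 1 < n,
        (π ⟨(i : ℕ) + 1, h⟩ : ℕ) = (π i : ℕ) + 1 ∧
        s1 i = s2 (π i) ∧
        s1 ⟨(i : ℕ) + 1, h⟩ = s2 (π ⟨(i : ℕ) + 1, h⟩))).card := by
  classical
  set P : Fin n → Prop := fun i => ∃ h : (i : ℕ) + 1 < n, b i = b ⟨(i : ℕ) + 1, h⟩ with hP
  -- positions satisfying P yield preserved duos
  have hsub : univ.filter P ⊆ univ.filter (fun i : Fin n =>
      ∃ h : (i : ℕ) + 1 < n,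
        (π ⟨(i : ℕ) + 1, h⟩ : ℕ) = (π i : ℕ) + 1 ∧
        s1 i = s2 (π i) ∧
        s1 ⟨(i : ℕ) + 1, h⟩ = s2 (π ⟨(i : ℕ) + 1, h⟩)) := by
    intro i hi
    simp only [mem_filter, mem_univ, true_and, hP] at hi ⊢
    obtain ⟨h, hb⟩ := hi
    refine ⟨h, ?_, (hchar i).symm, (hchar _).symm⟩
    have := hreal i h (by simpa using hb)
    simpa using this
  -- at most r positions fail P
  have hT : (univ.filter (fun i => ¬ P i)).card ≤ r := by
    have key : ∀ i ∈ univ.filter (fun i => ¬ P i), ∀ j ∈ univ.filter (fun i => ¬ P i),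
        i < j → b i ≠ b j := by
      intro i hi j hj hij hbij
      simp only [mem_filter, mem_univ, true_and, hP] at hi
      have h1 : (i : ℕ) + 1 < n := lt_of_le_of_lt (Nat.succ_le_of_lt hij) j.isLt
      apply hi
      refine ⟨h1, le_antisymm (hmono (by simp [Fin.le_def])) ?_⟩
      have h2 : b (⟨(i : ℕ) + 1, h1⟩ : Fin n) ≤ b j := hmono (by
        simp [Fin.le_def]; exact Nat.succ_le_of_lt hij)
      rw [hbij]; exact h2
    have hinj : Set.InjOn b (univ.filter (fun i => ¬ P i)) := by
      intro i hi j hj hij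
      by_contra hne
      rcases lt_or_gt_of_ne hne with h | h
      · exact key i (by simpa using hi) j (by simpa using hj) h hij
      · exact key j (by simpa using hj) i (by simpa using hi) h hij.symm
    calc (univ.filter (fun i => ¬ P i)).card
        ≤ (univ : Finset (Fin r)).card :=
          Finset.card_le_card_of_injOn b (fun _ _ => mem_univ _) hinj
      _ = r := by simp
  have hsplit : (univ.filter P).card + (univ.filter (fun i => ¬ P i)).card = n := by
    rw [Finset.card_filter_add_card_filter_not]
    simp
  have : n - r ≤ (univ.filter P).card := by omega
  exact this.trans (Finset.card_le_card hsub)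
end
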